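/- arXiv:math/0407429 — 2 statements merged into one kernel-verified Lean document; each statement's English description precedes it below -/
import Mathlib

section
/- For every n ≥ 1, the ideal J_n of B_n generated by the S_n-invariant elements with zero constant term equals the ideal of B_n generated by the elementary symmetric polynomials e_1,…,e_n in x_1,…,x_n together with the elementary symmetric polynomials f_1,…,f_n in y_1,…,y_n (equivalently, by the power sums Σ_{i=1}^n x_i^r and Σ_{i=1}^n y_i^r for all r ≥ 1). -/
/-!
Averaging over `Sₙ` (possible since `n!` is invertible) writes an invariant element with zero
constant term as a combination of orbit sums of monomials `xᵃ yᵇ` with `(a, b) ≠ 0`. Such an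
orbit sum vanishes in `Bₙ` unless `a` and `b` have disjoint supports. If they do, the product of
the symmetrizations of `xᵃ` and of `yᵇ` is a positive multiple of the orbit sum of `xᵃ yᵇ`:
every other term either dies by the relations `xᵢ yᵢ = 0` or is carried back to `xᵃ yᵇ` by a
permutation. One factor is a symmetric polynomial in the `x` (or in the `y`) alone, without
constant term, hence lies in the ideal generated by the elementary symmetric polynomials.
-/

open MvPolynomial

set_option maxHeartbeats 1000000
set_option synthInstance.maxHeartbeats 400000

noncomputable section

/-- the ideal `(x₁y₁, …, xₙyₙ)`. -/
abbrev Bideal (n : ℕ) : Ideal (MvPolynomial (Fin n ⊕ Fin n) ℂ) :=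
  Ideal.span (Set.range fun i : Fin n => X (Sum.inl i) * X (Sum.inr i))

/-- `B n = ℂ[x₁,…,xₙ,y₁,…,yₙ]/(x₁y₁,…,xₙyₙ)`, the `n`-th tensor power of `ℂ[x,y]/(xy)`.
The variable `x_i` is `X (Sum.inl i)` and `y_i` is `X (Sum.inr i)`. -/
abbrev B (n : ℕ) : Type := MvPolynomial (Fin n ⊕ Fin n) ℂ ⧸ Bideal n

abbrev mkB (n : ℕ) : MvPolynomial (Fin n ⊕ Fin n) ℂ →ₐ[ℂ] B n :=
  Ideal.Quotient.mkₐ ℂ (Bideal n)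

def xv (n : ℕ) (i : Fin n) : B n := mkB n (X (Sum.inl i))
def yv (n : ℕ) (i : Fin n) : B n := mkB n (X (Sum.inr i))

/-- the action of a permutation `σ ∈ Sₙ` on `B n`: `σ·xᵢ = x_{σ i}`, `σ·yᵢ = y_{σ i}`. -/
def permB (n : ℕ) (σ : Equiv.Perm (Fin n)) : B n →ₐ[ℂ] B n :=
  Ideal.Quotient.liftₐ (Bideal n)
    ((mkB n).comp (MvPolynomial.rename (Sum.map ⇑σ ⇑σ)))
    (by
      intro a ha
      have h : Bideal n ≤ RingHom.ker ((mkB n).comp (MvPolynomial.rename (Sum.map ⇑σ ⇑σ))).toRingHom := by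
        rw [Ideal.span_le]
        rintro _ ⟨i, rfl⟩
        simp only [SetLike.mem_coe, RingHom.mem_ker, AlgHom.toRingHom_eq_coe, RingHom.coe_coe,
          AlgHom.comp_apply, map_mul, rename_X, Sum.map_inl, Sum.map_inr]
        rw [← map_mul, Ideal.Quotient.mkₐ_eq_mk, Ideal.Quotient.eq_zero_iff_mem]
        exact Ideal.subset_span ⟨σ i, rfl⟩
      exact h ha)

/-- evaluation at the origin. -/
def ev0 (n : ℕ) : B n →ₐ[ℂ] ℂ :=
  Ideal.Quotient.liftₐ (Bideal n) (aeval fun _ => (0 : ℂ))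
    (by
      intro a ha
      have h : Bideal n ≤ RingHom.ker (aeval (R := ℂ) fun _ : Fin n ⊕ Fin n => (0 : ℂ)).toRingHom := by
        rw [Ideal.span_le]
        rintro _ ⟨i, rfl⟩
        simp [RingHom.mem_ker]
      exact h ha)

/-- `Jₙ`, the ideal of `B n` generated by the `Sₙ`-invariant elements vanishing at the origin. -/
def Jn (n : ℕ) : Ideal (B n) :=
  Ideal.span {p : B n | (∀ σ : Equiv.Perm (Fin n), permB n σ p = p) ∧ ev0 n p = 0}

/-- the symmetric coinvariant algebra `Rₙ = Bₙ/Jₙ`. -/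
abbrev Rn (n : ℕ) : Type := B n ⧸ Jn n

/-- the `k`-th elementary symmetric polynomial `e_k` in the `x` variables. -/
def eX (n k : ℕ) : B n :=
  ∑ S ∈ Finset.powersetCard k (Finset.univ : Finset (Fin n)), ∏ t ∈ S, xv n t

/-- the `k`-th elementary symmetric polynomial `f_k` in the `y` variables. -/
def fY (n k : ℕ) : B n :=
  ∑ S ∈ Finset.powersetCard k (Finset.univ : Finset (Fin n)), ∏ t ∈ S, yv n t

/-- the generating set `S^n_{i,j}` of the ideal `I^n_{i,j}`:
`e₁,…,e_{i−1}`, all `x_I` with `|I| = i`, `f₁,…,f_{j−1}`, all `y_J` with `|J| = j`. -/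
def Sij (n i j : ℕ) : Set (B n) :=
  {p | ∃ k, 1 ≤ k ∧ k < i ∧ p = eX n k} ∪
  {p | ∃ I : Finset (Fin n), I.card = i ∧ p = ∏ t ∈ I, xv n t} ∪
  {p | ∃ k, 1 ≤ k ∧ k < j ∧ p = fY n k} ∪
  {p | ∃ J : Finset (Fin n), J.card = j ∧ p = ∏ t ∈ J, yv n t}

/-- the ideal `I^n_{i,j}`; `R^n_{i,j} = B n ⧸ Iij n i j`. -/
def Iij (n i j : ℕ) : Ideal (B n) := Ideal.span (Sij n i j)

open Finset

namespace MvPolynomial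

variable {σ R S : Type*}

theorem aeval_mem_span_range [CommSemiring R] [CommSemiring S] [Algebra R S] (f : σ → S)
    {p : MvPolynomial σ R} (hp : constantCoeff p = 0) :
    aeval f p ∈ Ideal.span (Set.range f) := by
  have hp' : p ∈ idealOfVars σ R := by
    rw [← pow_one (idealOfVars σ R), mem_pow_idealOfVars_iff']
    intro x hx
    rwa [(Finsupp.degree_eq_zero_iff x).mp (Nat.lt_one_iff.mp hx)]
  simpa [Ideal.map_span, ← Set.range_comp, Function.comp_def] using
    Ideal.mem_map_of_mem (aeval (R := R) f) hp'

theorem constantCoeff_esymm [CommSemiring R] [Fintype σ] {k : ℕ} (hk : k ≠ 0) :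
    constantCoeff (esymm σ R k) = 0 := by
  simp only [esymm, map_sum, map_prod, constantCoeff_X]
  refine sum_eq_zero fun t ht => ?_
  obtain ⟨i, hi⟩ := card_pos.mp ((mem_powersetCard.mp ht).2 ▸ Nat.pos_of_ne_zero hk)
  exact prod_eq_zero hi rfl

theorem IsSymmetric.mem_span_esymm [CommRing R] [Fintype σ] {p : MvPolynomial σ R}
    (hp : p.IsSymmetric) (h0 : constantCoeff p = 0) :
    p ∈ Ideal.span (esymm σ R '' Set.Icc 1 (Fintype.card σ)) := by
  obtain ⟨q, hq⟩ := esymmAlgHom_surjective R (n := Fintype.card σ) le_rfl ⟨p, hp⟩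
  have hpq : p = aeval (fun i : Fin (Fintype.card σ) => esymm σ R (i + 1)) q := by
    rw [← esymmAlgHom_apply, hq]
  have hq0 : constantCoeff q = 0 := by
    rw [hpq, map_aeval] at h0
    simpa [constantCoeff_esymm] using h0
  rw [hpq]
  refine Ideal.span_mono ?_ (aeval_mem_span_range _ hq0)
  rintro _ ⟨i, rfl⟩
  exact ⟨i + 1, ⟨by omega, i.isLt⟩, rfl⟩

theorem isSymmetric_sum_rename [CommSemiring R] [Fintype σ] [DecidableEq σ]
    (p : MvPolynomial σ R) : (∑ e : Equiv.Perm σ, rename e p).IsSymmetric := fun τ => by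
  simp only [map_sum, rename_rename]
  exact Fintype.sum_equiv (Equiv.mulLeft τ) _ _ fun _ => rfl

end MvPolynomial

theorem Set.InjOn.exists_perm_eqOn {α : Type*} [Fintype α] {s : Set α} {f : α → α}
    (hf : Set.InjOn f s) : ∃ π : Equiv.Perm α, Set.EqOn π f s := by
  classical
  obtain ⟨g, hg⟩ := Set.MapsTo.exists_equiv_extend_of_card_eq (t := (Finset.univ : Finset α))
    (Finset.card_univ).symm (fun x _ => Finset.mem_coe.mpr (Finset.mem_univ (f x))) hf
  exact ⟨g.trans (Equiv.subtypeUnivEquiv Finset.mem_univ), fun i hi => hg i hi⟩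

theorem Equiv.Perm.exists_comp_eq_of_disjoint {α M : Type*} [Fintype α] [Zero M] {a b : α → M}
    (ρ : Equiv.Perm α) (hab : ∀ i, a i = 0 ∨ b i = 0) (habρ : ∀ i, a i = 0 ∨ b (ρ i) = 0) :
    ∃ π : Equiv.Perm α, a ∘ π = a ∧ b ∘ π = b ∘ ρ := by
  classical
  set s := {i | a i ≠ 0 ∨ b (ρ i) ≠ 0}
  have hinj : Set.InjOn (fun i => if a i ≠ 0 then i else ρ i) s := by
    intro i hi j hj hij
    simp only [s, Set.mem_ofPred_eq] at hi hj
    by_cases ha : a i ≠ 0 <;> by_cases hb : a j ≠ 0 <;> simp only [ha, hb, if_false] at hij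
    all_goals grind [ρ.injective.eq_iff]
  obtain ⟨π, hπ⟩ := hinj.exists_perm_eqOn
  have hfix : ∀ i, a i ≠ 0 → π i = i := fun i hi => by simpa [hi] using hπ (Or.inl hi)
  have hmove : ∀ i, b (ρ i) ≠ 0 → π i = ρ i := fun i hi => by
    have : a i = 0 := (habρ i).resolve_right hi
    simpa [this] using hπ (Or.inr hi)
  refine ⟨π, funext fun i => ?_, funext fun i => ?_⟩
  · by_cases hai : a i = 0
    · rw [Function.comp_apply, hai]
      by_contra h
      have hπi : π i = i := π.injective (hfix _ h)
      exact h (by rw [hπi, hai])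
    · rw [Function.comp_apply, hfix i hai]
  · by_cases hbi : b (ρ i) = 0
    · by_contra h
      have hj : b (ρ (ρ.symm (π i))) ≠ 0 := by simpa [hbi] using h
      have hπi : ρ.symm (π i) = i := π.injective ((hmove _ hj).trans (ρ.apply_symm_apply _))
      exact hj (by rw [hπi, hbi])
    · rw [Function.comp_apply, hmove i hbi, Function.comp_apply]

section

variable {n : ℕ}

def ofXPoly (n : ℕ) : MvPolynomial (Fin n) ℂ →ₐ[ℂ] B n := (mkB n).comp (rename Sum.inl)

def ofYPoly (n : ℕ) : MvPolynomial (Fin n) ℂ →ₐ[ℂ] B n := (mkB n).comp (rename Sum.inr)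

theorem ofXPoly_X (i : Fin n) : ofXPoly n (X i) = xv n i := by simp [ofXPoly, xv]

theorem ofYPoly_X (i : Fin n) : ofYPoly n (X i) = yv n i := by simp [ofYPoly, yv]

theorem permB_mkB (σ : Equiv.Perm (Fin n)) (p : MvPolynomial (Fin n ⊕ Fin n) ℂ) :
    permB n σ (mkB n p) = mkB n (rename (Sum.map σ σ) p) := rfl

theorem permB_xv (σ : Equiv.Perm (Fin n)) (i : Fin n) : permB n σ (xv n i) = xv n (σ i) := by
  rw [xv, permB_mkB, rename_X]
  rfl

theorem permB_yv (σ : Equiv.Perm (Fin n)) (i : Fin n) : permB n σ (yv n i) = yv n (σ i) := by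
  rw [yv, permB_mkB, rename_X]
  rfl

theorem permB_mul (σ τ : Equiv.Perm (Fin n)) (p : B n) :
    permB n (σ * τ) p = permB n σ (permB n τ p) := by
  obtain ⟨p, rfl⟩ := Ideal.Quotient.mkₐ_surjective ℂ (Bideal n) p
  simp only [permB_mkB, rename_rename, Sum.map_comp_map, Equiv.Perm.coe_mul]

theorem permB_ofXPoly (σ : Equiv.Perm (Fin n)) (p : MvPolynomial (Fin n) ℂ) :
    permB n σ (ofXPoly n p) = ofXPoly n (rename σ p) := by
  simp only [ofXPoly, AlgHom.comp_apply, permB_mkB, rename_rename]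
  rfl

theorem permB_ofYPoly (σ : Equiv.Perm (Fin n)) (p : MvPolynomial (Fin n) ℂ) :
    permB n σ (ofYPoly n p) = ofYPoly n (rename σ p) := by
  simp only [ofYPoly, AlgHom.comp_apply, permB_mkB, rename_rename]
  rfl

theorem ev0_mkB (p : MvPolynomial (Fin n ⊕ Fin n) ℂ) : ev0 n (mkB n p) = constantCoeff p := by
  change aeval _ p = _
  simp

theorem ev0_ofXPoly (p : MvPolynomial (Fin n) ℂ) : ev0 n (ofXPoly n p) = constantCoeff p := by
  rw [ofXPoly, AlgHom.comp_apply, ev0_mkB, constantCoeff_rename]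

theorem ev0_ofYPoly (p : MvPolynomial (Fin n) ℂ) : ev0 n (ofYPoly n p) = constantCoeff p := by
  rw [ofYPoly, AlgHom.comp_apply, ev0_mkB, constantCoeff_rename]

theorem eX_eq_ofXPoly (k : ℕ) : eX n k = ofXPoly n (esymm (Fin n) ℂ k) := by
  simp [eX, esymm, ofXPoly_X]

theorem fY_eq_ofYPoly (k : ℕ) : fY n k = ofYPoly n (esymm (Fin n) ℂ k) := by
  simp [fY, esymm, ofYPoly_X]

theorem xv_mul_yv_self (i : Fin n) : xv n i * yv n i = 0 := by
  rw [xv, yv, ← map_mul, Ideal.Quotient.mkₐ_eq_mk, Ideal.Quotient.eq_zero_iff_mem]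
  exact Ideal.subset_span ⟨i, rfl⟩

def esymmIdeal (n : ℕ) : Ideal (B n) :=
  Ideal.span ({p | ∃ k, 1 ≤ k ∧ k ≤ n ∧ p = eX n k} ∪ {p | ∃ k, 1 ≤ k ∧ k ≤ n ∧ p = fY n k})

theorem ofXPoly_mem_Jn {p : MvPolynomial (Fin n) ℂ} (hp : p.IsSymmetric)
    (h0 : constantCoeff p = 0) : ofXPoly n p ∈ Jn n :=
  Ideal.subset_span ⟨fun σ => by rw [permB_ofXPoly, hp σ], by rw [ev0_ofXPoly, h0]⟩

theorem ofYPoly_mem_Jn {p : MvPolynomial (Fin n) ℂ} (hp : p.IsSymmetric)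
    (h0 : constantCoeff p = 0) : ofYPoly n p ∈ Jn n :=
  Ideal.subset_span ⟨fun σ => by rw [permB_ofYPoly, hp σ], by rw [ev0_ofYPoly, h0]⟩

theorem esymmIdeal_le_Jn : esymmIdeal n ≤ Jn n := by
  rw [esymmIdeal, Ideal.span_le]
  rintro _ (⟨k, hk, -, rfl⟩ | ⟨k, hk, -, rfl⟩)
  · rw [eX_eq_ofXPoly]
    exact ofXPoly_mem_Jn (esymm_isSymmetric _ _ k) (constantCoeff_esymm (by omega))
  · rw [fY_eq_ofYPoly]
    exact ofYPoly_mem_Jn (esymm_isSymmetric _ _ k) (constantCoeff_esymm (by omega))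

theorem ofXPoly_mem_esymmIdeal {p : MvPolynomial (Fin n) ℂ} (hp : p.IsSymmetric)
    (h0 : constantCoeff p = 0) : ofXPoly n p ∈ esymmIdeal n := by
  have := Ideal.mem_map_of_mem (ofXPoly n) (hp.mem_span_esymm h0)
  rw [Ideal.map_span] at this
  refine Ideal.span_mono ?_ this
  rintro _ ⟨_, ⟨k, ⟨hk1, hk2⟩, rfl⟩, rfl⟩
  exact Or.inl ⟨k, hk1, by simpa using hk2, (eX_eq_ofXPoly k).symm⟩

theorem ofYPoly_mem_esymmIdeal {p : MvPolynomial (Fin n) ℂ} (hp : p.IsSymmetric)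
    (h0 : constantCoeff p = 0) : ofYPoly n p ∈ esymmIdeal n := by
  have := Ideal.mem_map_of_mem (ofYPoly n) (hp.mem_span_esymm h0)
  rw [Ideal.map_span] at this
  refine Ideal.span_mono ?_ this
  rintro _ ⟨_, ⟨k, ⟨hk1, hk2⟩, rfl⟩, rfl⟩
  exact Or.inr ⟨k, hk1, by simpa using hk2, (fY_eq_ofYPoly k).symm⟩

def xMonomial (a : Fin n → ℕ) : B n := ∏ i, xv n i ^ a i

def yMonomial (b : Fin n → ℕ) : B n := ∏ i, yv n i ^ b i

theorem xMonomial_eq_ofXPoly (a : Fin n → ℕ) : xMonomial a = ofXPoly n (∏ i, X i ^ a i) := by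
  simp [xMonomial, ofXPoly_X]

theorem yMonomial_eq_ofYPoly (b : Fin n → ℕ) : yMonomial b = ofYPoly n (∏ i, X i ^ b i) := by
  simp [yMonomial, ofYPoly_X]

theorem permB_xMonomial (σ : Equiv.Perm (Fin n)) (a : Fin n → ℕ) :
    permB n σ (xMonomial a) = xMonomial (a ∘ ⇑σ⁻¹) := by
  rw [xMonomial, xMonomial, map_prod, ← Equiv.prod_comp σ (fun i => xv n i ^ (a ∘ ⇑σ⁻¹) i)]
  simp [permB_xv]

theorem permB_yMonomial (σ : Equiv.Perm (Fin n)) (b : Fin n → ℕ) :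
    permB n σ (yMonomial b) = yMonomial (b ∘ ⇑σ⁻¹) := by
  rw [yMonomial, yMonomial, map_prod, ← Equiv.prod_comp σ (fun i => yv n i ^ (b ∘ ⇑σ⁻¹) i)]
  simp [permB_yv]

theorem xMonomial_mul_yMonomial_eq_zero {a b : Fin n → ℕ} (h : ∃ i, a i ≠ 0 ∧ b i ≠ 0) :
    xMonomial a * yMonomial b = 0 := by
  obtain ⟨i, ha, hb⟩ := h
  rw [xMonomial, yMonomial, ← Finset.mul_prod_erase _ _ (mem_univ i),
    ← Finset.mul_prod_erase _ _ (mem_univ i), ← pow_sub_one_mul ha, ← pow_sub_one_mul hb]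
  have := xv_mul_yv_self i
  linear_combination (xv n i ^ (a i - 1) * ∏ x ∈ univ.erase i, xv n x ^ a x) *
    (yv n i ^ (b i - 1) * ∏ x ∈ univ.erase i, yv n x ^ b x) * this

theorem mkB_monomial (d : Fin n ⊕ Fin n →₀ ℕ) (c : ℂ) :
    mkB n (monomial d c) = c • (xMonomial (d ∘ Sum.inl) * yMonomial (d ∘ Sum.inr)) := by
  rw [← mul_one c, ← smul_eq_mul, ← smul_monomial, map_smul, monomial_eq, C_1, one_mul,
    Finsupp.prod_fintype _ _ (fun _ => pow_zero _), Fintype.prod_sum_type]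
  simp [xMonomial, yMonomial, xv, yv]

def orbitSum (a b : Fin n → ℕ) : B n := ∑ σ, permB n σ (xMonomial a * yMonomial b)

theorem sum_permB_permB (τ : Equiv.Perm (Fin n)) (p : B n) :
    ∑ σ, permB n σ (permB n τ p) = ∑ σ, permB n σ p := by
  simp_rw [← permB_mul]
  exact Fintype.sum_equiv (Equiv.mulRight τ) _ _ fun _ => rfl

theorem sum_permB_mul_sum_permB (u v : B n) :
    (∑ σ, permB n σ u) * (∑ σ, permB n σ v) = ∑ ρ, ∑ σ, permB n σ (u * permB n ρ v) := by
  rw [sum_mul_sum, sum_comm (s := univ) (t := univ) (f := fun ρ σ => permB n σ _)]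
  refine sum_congr rfl fun σ _ => ?_
  rw [← Fintype.sum_equiv (Equiv.mulLeft σ) (fun ρ => permB n σ u * permB n (σ * ρ) v) _
    fun _ => rfl]
  simp only [permB_mul, map_mul]

theorem orbitSum_comp_perm (a b : Fin n → ℕ) (π : Equiv.Perm (Fin n)) :
    orbitSum (a ∘ π) (b ∘ π) = orbitSum a b := by
  rw [orbitSum, orbitSum, ← sum_permB_permB π⁻¹ (xMonomial a * yMonomial b), map_mul,
    permB_xMonomial, permB_yMonomial, inv_inv]

theorem orbitSum_eq_zero {a b : Fin n → ℕ} (h : ∃ i, a i ≠ 0 ∧ b i ≠ 0) : orbitSum a b = 0 := by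
  simp [orbitSum, xMonomial_mul_yMonomial_eq_zero h]

theorem orbitSum_comp_perm_right {a b : Fin n → ℕ} (hab : ∀ i, a i = 0 ∨ b i = 0)
    (ρ : Equiv.Perm (Fin n)) :
    orbitSum a (b ∘ ρ) = if ∀ i, a i = 0 ∨ b (ρ i) = 0 then orbitSum a b else 0 := by
  split_ifs with h
  · obtain ⟨π, ha, hb⟩ := ρ.exists_comp_eq_of_disjoint hab h
    rw [← hb, ← orbitSum_comp_perm a b π, ha]
  · push Not at h
    exact orbitSum_eq_zero h

theorem sum_permB_xMonomial_mem_esymmIdeal {a : Fin n → ℕ} (ha : a ≠ 0) :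
    ∑ σ, permB n σ (xMonomial a) ∈ esymmIdeal n := by
  obtain ⟨i, hi⟩ := Function.ne_iff.mp ha
  simp_rw [xMonomial_eq_ofXPoly, permB_ofXPoly, ← map_sum]
  refine ofXPoly_mem_esymmIdeal (isSymmetric_sum_rename _) ?_
  rw [map_sum]
  refine sum_eq_zero fun σ _ => ?_
  rw [constantCoeff_rename, map_prod]
  exact prod_eq_zero (mem_univ i) (by simpa using hi)

theorem sum_permB_yMonomial_mem_esymmIdeal {b : Fin n → ℕ} (hb : b ≠ 0) :
    ∑ σ, permB n σ (yMonomial b) ∈ esymmIdeal n := by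
  obtain ⟨i, hi⟩ := Function.ne_iff.mp hb
  simp_rw [yMonomial_eq_ofYPoly, permB_ofYPoly, ← map_sum]
  refine ofYPoly_mem_esymmIdeal (isSymmetric_sum_rename _) ?_
  rw [map_sum]
  refine sum_eq_zero fun σ _ => ?_
  rw [constantCoeff_rename, map_prod]
  exact prod_eq_zero (mem_univ i) (by simpa using hi)

theorem orbitSum_mem_esymmIdeal {a b : Fin n → ℕ} (hab : a ≠ 0 ∨ b ≠ 0) :
    orbitSum a b ∈ esymmIdeal n := by
  by_cases hdisj : ∀ i, a i = 0 ∨ b i = 0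
  swap
  · push Not at hdisj
    rw [orbitSum_eq_zero hdisj]
    exact Ideal.zero_mem _
  obtain ⟨N, hN, hprod⟩ : ∃ N : ℕ, N ≠ 0 ∧
      (∑ σ, permB n σ (xMonomial a)) * (∑ σ, permB n σ (yMonomial b)) =
        (N : ℂ) • orbitSum a b := by
    refine ⟨#{ρ : Equiv.Perm (Fin n) | ∀ i, a i = 0 ∨ b (ρ⁻¹ i) = 0},
      card_ne_zero.mpr ⟨1, mem_filter.mpr ⟨mem_univ _, by simpa using hdisj⟩⟩, ?_⟩
    have hterm (ρ : Equiv.Perm (Fin n)) :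
        ∑ σ, permB n σ (xMonomial a * permB n ρ (yMonomial b)) = orbitSum a (b ∘ ⇑ρ⁻¹) := by
      rw [permB_yMonomial, orbitSum]
    simp_rw [sum_permB_mul_sum_permB, hterm, orbitSum_comp_perm_right hdisj, sum_ite,
      sum_const_zero, add_zero, sum_const, Nat.cast_smul_eq_nsmul]
  have hmem : (N : ℂ) • orbitSum a b ∈ esymmIdeal n := by
    rw [← hprod]
    rcases hab with ha | hb
    · exact Ideal.mul_mem_right _ _ (sum_permB_xMonomial_mem_esymmIdeal ha)
    · exact Ideal.mul_mem_left _ _ (sum_permB_yMonomial_mem_esymmIdeal hb)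
  simpa [Nat.cast_ne_zero.mpr hN] using Submodule.smul_of_tower_mem _ (N : ℂ)⁻¹ hmem

theorem sum_permB_mem_esymmIdeal {p : B n} (hp : ev0 n p = 0) :
    ∑ σ, permB n σ p ∈ esymmIdeal n := by
  obtain ⟨Q, rfl⟩ := Ideal.Quotient.mkₐ_surjective ℂ (Bideal n) p
  rw [ev0_mkB] at hp
  rw [Q.as_sum, map_sum]
  simp_rw [map_sum]
  rw [sum_comm]
  refine sum_mem fun d _ => ?_
  by_cases hd : d = 0
  · simp [hd, ← constantCoeff_eq, hp]
  simp_rw [mkB_monomial, map_smul, ← smul_sum]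
  refine Submodule.smul_of_tower_mem _ _ (orbitSum_mem_esymmIdeal ?_)
  by_contra! h
  refine hd (Finsupp.ext fun x => ?_)
  rcases x with i | i
  exacts [congrFun h.1 i, congrFun h.2 i]

theorem Jn_le_esymmIdeal : Jn n ≤ esymmIdeal n := by
  rw [Jn, Ideal.span_le]
  rintro p ⟨hinv, h0⟩
  have hsum : ∑ σ, permB n σ p = (n.factorial : ℂ) • p := by
    simp [hinv, Fintype.card_perm, Nat.cast_smul_eq_nsmul]
  have := Submodule.smul_of_tower_mem (esymmIdeal n) (n.factorial : ℂ)⁻¹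
    (sum_permB_mem_esymmIdeal h0)
  simpa [hsum, smul_smul, Nat.factorial_ne_zero] using this

end

theorem Jn_eq_span_elementary_symmetric_general (n : ℕ) :
    Jn n = Ideal.span ({p | ∃ k, 1 ≤ k ∧ k ≤ n ∧ p = eX n k} ∪
                       {p | ∃ k, 1 ≤ k ∧ k ≤ n ∧ p = fY n k}) :=
  le_antisymm Jn_le_esymmIdeal esymmIdeal_le_Jn

/-- For every `n ≥ 1`, the ideal `Jₙ` of `Bₙ` generated by the
`Sₙ`-invariant elements with zero constant term equals the ideal generated by the
elementary symmetric polynomials `e₁,…,eₙ` in `x₁,…,xₙ` together with the elementary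
symmetric polynomials `f₁,…,fₙ` in `y₁,…,yₙ`. -/
theorem Jn_eq_span_elementary_symmetric (n : ℕ) (hn : 1 ≤ n) :
    Jn n = Ideal.span ({p | ∃ k, 1 ≤ k ∧ k ≤ n ∧ p = eX n k} ∪
                       {p | ∃ k, 1 ≤ k ∧ k ≤ n ∧ p = fY n k}) :=
  Jn_eq_span_elementary_symmetric_general n
end
end

section
/- For i, j ≥ 1 with i + j ≤ n + 1, each of the elements e_1,…,e_{i−1}, f_1,…,f_{j−1}, x_I (|I| = i), y_J (|J| = j) of B_n is the leading (top-degree) homogeneous component of some element of the vanishing ideal I_W. Explicitly: e_k − e_k(a_1,…,a_{i−1},0,…,0) ∈ I_W and f_l − f_l(b_1,…,b_{j−1},0,…,0) ∈ I_W, while x_I ∈ I_W and y_J ∈ I_W. -/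
open MvPolynomial

set_option maxHeartbeats 1000000
set_option synthInstance.maxHeartbeats 400000

noncomputable section

/-- the `k`-th elementary symmetric polynomial in the `x` variables, upstairs. -/
def eXp (n k : ℕ) : MvPolynomial (Fin n ⊕ Fin n) ℂ :=
  ∑ S ∈ Finset.powersetCard k (Finset.univ : Finset (Fin n)), ∏ t ∈ S, X (Sum.inl t)

/-- the `k`-th elementary symmetric polynomial in the `y` variables, upstairs. -/
def fYp (n k : ℕ) : MvPolynomial (Fin n ⊕ Fin n) ℂ :=
  ∑ S ∈ Finset.powersetCard k (Finset.univ : Finset (Fin n)), ∏ t ∈ S, X (Sum.inr t)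

/-- evaluation of a polynomial at a point `z ∈ (ℂ²)ⁿ`, `x_t ↦ (z t).1`, `y_t ↦ (z t).2`. -/
def evPt (n : ℕ) (z : Fin n → ℂ × ℂ) : MvPolynomial (Fin n ⊕ Fin n) ℂ →ₐ[ℂ] ℂ :=
  aeval (Sum.elim (fun t => (z t).1) (fun t => (z t).2))

/-- the point `z₀ ∈ Mⁿ` whose first `i−1` coordinates are `(a₁,0),…,(a_{i−1},0)`,
next `j−1` coordinates are `(0,b₁),…,(0,b_{j−1})`, and remaining coordinates are `(0,0)`. -/
def z0 (n i j : ℕ) (a : Fin (i - 1) → ℂ) (b : Fin (j - 1) → ℂ) : Fin n → ℂ × ℂ :=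
  fun k =>
    if h : (k : ℕ) < i - 1 then (a ⟨k, h⟩, 0)
    else if h' : (k : ℕ) < (i - 1) + (j - 1) then (0, b ⟨(k : ℕ) - (i - 1), by omega⟩)
    else (0, 0)

/-- the `Sₙ`-orbit `W` of the point `z₀`. -/
def orbitW (n i j : ℕ) (a : Fin (i - 1) → ℂ) (b : Fin (j - 1) → ℂ) : Set (Fin n → ℂ × ℂ) :=
  {z | ∃ σ : Equiv.Perm (Fin n), z = z0 n i j a b ∘ ⇑σ}

/-- the ideal of polynomials vanishing at every point of `W`. -/
def vanishingIdealPoly (n : ℕ) (W : Set (Fin n → ℂ × ℂ)) :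
    Ideal (MvPolynomial (Fin n ⊕ Fin n) ℂ) where
  carrier := {P | ∀ z ∈ W, evPt n z P = 0}
  zero_mem' := by intro z _; simp
  add_mem' := by intro P Q hP hQ z hz; simp [hP z hz, hQ z hz]
  smul_mem' := by intro c P hP z hz; simp [smul_eq_mul, hP z hz]

/-- `I_W`, the ideal of elements of `B n` vanishing at every point of `W ⊆ Mⁿ`. -/
def IW (n : ℕ) (W : Set (Fin n → ℂ × ℂ)) : Ideal (B n) :=
  (vanishingIdealPoly n W).map (Ideal.Quotient.mk (Bideal n))

-- helper lemmas
lemma mem_IW_of_vanish (n : ℕ) (W : Set (Fin n → ℂ × ℂ)) (P : MvPolynomial (Fin n ⊕ Fin n) ℂ)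
    (h : ∀ z ∈ W, evPt n z P = 0) : mkB n P ∈ IW n W := by
  rw [Ideal.Quotient.mkₐ_eq_mk]
  exact Ideal.mem_map_of_mem _ (show P ∈ vanishingIdealPoly n W from h)

lemma sum_prod_perm (n k : ℕ) (g : Fin n → ℂ) (σ : Equiv.Perm (Fin n)) :
    ∑ S ∈ Finset.powersetCard k Finset.univ, ∏ t ∈ S, g (σ t)
      = ∑ S ∈ Finset.powersetCard k Finset.univ, ∏ t ∈ S, g t := by
  refine Finset.sum_nbij' (fun S => S.image σ) (fun S => S.image σ.symm) ?_ ?_ ?_ ?_ ?_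
  · intro S hS
    simp only [Finset.mem_powersetCard_univ] at hS ⊢
    rw [Finset.card_image_of_injective _ σ.injective]; exact hS
  · intro S hS
    simp only [Finset.mem_powersetCard_univ] at hS ⊢
    rw [Finset.card_image_of_injective _ σ.symm.injective]; exact hS
  · intro S _; ext t; simp
  · intro S _; ext t; simp
  · intro S _
    rw [Finset.prod_image (fun x _ y _ h => σ.injective h)]

lemma evPt_C (n : ℕ) (z : Fin n → ℂ × ℂ) (r : ℂ) : evPt n z (C r) = r := by
  simp [evPt]

lemma evPt_eXp (n k : ℕ) (z : Fin n → ℂ × ℂ) :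
    evPt n z (eXp n k) = ∑ S ∈ Finset.powersetCard k Finset.univ, ∏ t ∈ S, (z t).1 := by
  simp [evPt, eXp]

lemma evPt_fYp (n k : ℕ) (z : Fin n → ℂ × ℂ) :
    evPt n z (fYp n k) = ∑ S ∈ Finset.powersetCard k Finset.univ, ∏ t ∈ S, (z t).2 := by
  simp [evPt, fYp]

lemma z0_fst_eq_zero (n i j : ℕ) (a : Fin (i - 1) → ℂ) (b : Fin (j - 1) → ℂ)
    (k : Fin n) (h : ¬ (k : ℕ) < i - 1) : (z0 n i j a b k).1 = 0 := by
  unfold z0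
  rw [dif_neg h]
  split <;> rfl

lemma z0_snd_eq_zero (n i j : ℕ) (a : Fin (i - 1) → ℂ) (b : Fin (j - 1) → ℂ)
    (k : Fin n) (h : ¬ ((i:ℕ) - 1 ≤ (k : ℕ) ∧ (k : ℕ) < (i - 1) + (j - 1))) :
    (z0 n i j a b k).2 = 0 := by
  unfold z0
  by_cases h1 : (k : ℕ) < i - 1
  · rw [dif_pos h1]
  · rw [dif_neg h1, dif_neg (by omega)]

/-- For `i, j ≥ 1` with `i + j ≤ n + 1`, each generator of `I^n_{i,j}`
is the leading homogeneous component of an element of the vanishing ideal `I_W`.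
Explicitly: `e_k − e_k(a₁,…,a_{i−1},0,…,0) ∈ I_W` for `1 ≤ k ≤ i−1`,
`f_l − f_l(b₁,…,b_{j−1},0,…,0) ∈ I_W` for `1 ≤ l ≤ j−1`, while `x_I ∈ I_W` for `|I| = i`
and `y_J ∈ I_W` for `|J| = j`. -/
theorem generators_are_leading_terms_of_IW (n i j : ℕ) (hi : 1 ≤ i) (hj : 1 ≤ j)
    (hij : i + j ≤ n + 1)
    (a : Fin (i - 1) → ℂ) (ha : Function.Injective a) (ha0 : ∀ t, a t ≠ 0)
    (b : Fin (j - 1) → ℂ) (hb : Function.Injective b) (hb0 : ∀ t, b t ≠ 0) :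
    (∀ k, 1 ≤ k → k < i →
      mkB n (eXp n k - C (evPt n (z0 n i j a b) (eXp n k))) ∈ IW n (orbitW n i j a b)) ∧
    (∀ l, 1 ≤ l → l < j →
      mkB n (fYp n l - C (evPt n (z0 n i j a b) (fYp n l))) ∈ IW n (orbitW n i j a b)) ∧
    (∀ I : Finset (Fin n), I.card = i →
      (∏ t ∈ I, xv n t) ∈ IW n (orbitW n i j a b)) ∧
    (∀ J : Finset (Fin n), J.card = j →
      (∏ t ∈ J, yv n t) ∈ IW n (orbitW n i j a b)) := by
  refine ⟨?_, ?_, ?_, ?_⟩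
  · intro k _ _
    refine mem_IW_of_vanish n _ _ ?_
    rintro z ⟨σ, rfl⟩
    rw [map_sub, evPt_C, evPt_eXp, evPt_eXp]
    simp only [Function.comp_apply, Algebra.algebraMap_self, map_id, RingHom.id_apply]
    rw [sum_prod_perm n k (fun t => (z0 n i j a b t).1) σ, sub_self]
  · intro l _ _
    refine mem_IW_of_vanish n _ _ ?_
    rintro z ⟨σ, rfl⟩
    rw [map_sub, evPt_C, evPt_fYp, evPt_fYp]
    simp only [Function.comp_apply, Algebra.algebraMap_self, map_id, RingHom.id_apply]
    rw [sum_prod_perm n l (fun t => (z0 n i j a b t).2) σ, sub_self]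
  · intro I hI
    have : (∏ t ∈ I, xv n t) = mkB n (∏ t ∈ I, X (Sum.inl t)) := by
      rw [map_prod]; rfl
    rw [this]
    refine mem_IW_of_vanish n _ _ ?_
    rintro z ⟨σ, rfl⟩
    rw [map_prod]
    have hex : ∃ t ∈ I, ¬ ((σ t : ℕ) < i - 1) := by
      by_contra hc
      push_neg at hc
      have hsub : I.image σ ⊆ Finset.univ.filter (fun k : Fin n => (k : ℕ) < i - 1) := by
        intro t ht
        obtain ⟨s, hs, rfl⟩ := Finset.mem_image.mp ht
        exact Finset.mem_filter.mpr ⟨Finset.mem_univ _, hc s hs⟩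
      have h1 : (I.image σ).card = i := by
        rw [Finset.card_image_of_injective _ σ.injective, hI]
      have h2 : (Finset.univ.filter (fun k : Fin n => (k : ℕ) < i - 1)).card ≤ i - 1 := by
        have := Finset.card_le_card_of_injOn (f := fun k : Fin n => (k : ℕ))
          (s := Finset.univ.filter (fun k : Fin n => (k : ℕ) < i - 1))
          (t := Finset.range (i-1))
          (fun k hk => Finset.mem_range.mpr (Finset.mem_filter.mp hk).2)
          (fun x _ y _ h => Fin.val_injective h)
        simpa using this
      have := Finset.card_le_card hsub
      omega
    obtain ⟨t, ht, hnt⟩ := hex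
    refine Finset.prod_eq_zero ht ?_
    simp only [evPt, aeval_X, Sum.elim_inl, Function.comp_apply]
    exact z0_fst_eq_zero n i j a b (σ t) hnt
  · intro J hJ
    have : (∏ t ∈ J, yv n t) = mkB n (∏ t ∈ J, X (Sum.inr t)) := by
      rw [map_prod]; rfl
    rw [this]
    refine mem_IW_of_vanish n _ _ ?_
    rintro z ⟨σ, rfl⟩
    rw [map_prod]
    have hex : ∃ t ∈ J, ¬ ((i:ℕ) - 1 ≤ (σ t : ℕ) ∧ (σ t : ℕ) < (i - 1) + (j - 1)) := by
      by_contra hc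
      push_neg at hc
      have hsub : J.image σ ⊆ Finset.univ.filter
          (fun k : Fin n => (i:ℕ) - 1 ≤ (k : ℕ) ∧ (k : ℕ) < (i - 1) + (j - 1)) := by
        intro t ht
        obtain ⟨s, hs, rfl⟩ := Finset.mem_image.mp ht
        exact Finset.mem_filter.mpr ⟨Finset.mem_univ _, hc s hs⟩
      have h1 : (J.image σ).card = j := by
        rw [Finset.card_image_of_injective _ σ.injective, hJ]
      have h2 : (Finset.univ.filter
          (fun k : Fin n => (i:ℕ) - 1 ≤ (k : ℕ) ∧ (k : ℕ) < (i - 1) + (j - 1))).card ≤ j - 1 := by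
        have := Finset.card_le_card_of_injOn (f := fun k : Fin n => (k : ℕ) - (i - 1))
          (s := Finset.univ.filter (fun k : Fin n => (i:ℕ) - 1 ≤ (k : ℕ) ∧ (k : ℕ) < (i - 1) + (j - 1)))
          (t := Finset.range (j-1))
          (fun k hk => by
            have := (Finset.mem_filter.mp hk).2
            show (k:ℕ) - (i - 1) ∈ Finset.range (j - 1)
            exact Finset.mem_range.mpr (by omega))
          (fun x hx y hy h => by
            have hx' := (Finset.mem_filter.mp hx).2
            have hy' := (Finset.mem_filter.mp hy).2
            have h' : (x:ℕ) - (i - 1) = (y:ℕ) - (i - 1) := h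
            exact Fin.val_injective (by omega))
        simpa using this
      have := Finset.card_le_card hsub
      omega
    obtain ⟨t, ht, hnt⟩ := hex
    refine Finset.prod_eq_zero ht ?_
    simp only [evPt, aeval_X, Sum.elim_inr, Function.comp_apply]
    exact z0_snd_eq_zero n i j a b (σ t) hnt

end
end
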